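/- Let μ and δ be as in Tolsa's theory and g ∈ L²_loc(μ). Fix doubling cubes Q ⊂ R. Let a₁ = |g − m_R(g)|²/(g − m_R(g)) · χ_{Q ∩ {g ≠ m_R(g)}}, a₂ = C_R χ_R with C_R chosen so that b := a₁ + a₂ has μ-integral zero. Then |C_R| μ(R) = |∫_Q a₁ dμ| ≤ ‖a₁‖_{L²(μ)} [μ(Q)]^{1/2} and b is a (2,1)-atomic block with |b|_{H^{1,2}_{atb}(μ)} ≤ C‖a₁‖_{L²(μ)}[μ(Q)]^{1/2}(1 + δ(Q,R)). -/

import Mathlib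

open MeasureTheory Metric Set Filter ENNReal

noncomputable section

abbrev Euc (d : ℕ) := EuclideanSpace ℝ (Fin d)

/-- The closed axis-parallel cube with center `c` and side length `l`. -/
def cube {d : ℕ} (c : Euc d) (l : ℝ) : Set (Euc d) := {y | ∀ i, |y i - c i| ≤ l / 2}

/-- The polynomial growth condition `μ(B(x,r)) ≤ C rⁿ`. -/
def GrowthCond {d : ℕ} (μ : Measure (Euc d)) (C n : ℝ) : Prop :=
  ∀ (x : Euc d) (r : ℝ), 0 < r → μ (Metric.ball x r) ≤ ENNReal.ofReal (C * r ^ n)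

/-- The side length of `Q_R`, the smallest cube concentric with `Q` containing `Q ∪ R`. -/
def sideQR {d : ℕ} (cQ : Euc d) (lQ : ℝ) (cR : Euc d) (lR : ℝ) : ℝ :=
  sInf {t : ℝ | lQ ≤ t ∧ cube cR lR ⊆ cube cQ t}

/-- Tolsa's coefficient `δ(Q,R)`. -/
def tolsaDelta {d : ℕ} (μ : Measure (Euc d)) (n : ℝ) (cQ : Euc d) (lQ : ℝ)
    (cR : Euc d) (lR : ℝ) : ℝ :=
  max (∫ x in cube cQ (sideQR cQ lQ cR lR) \ cube cQ lQ, ‖x - cQ‖ ^ (-n) ∂μ)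
      (∫ x in cube cR (sideQR cR lR cQ lQ) \ cube cR lR, ‖x - cR‖ ^ (-n) ∂μ)

/-- The data of a block: `b = λ₁ a₁ + λ₂ a₂`, supported in the cube `R` with
atoms `a_j` supported in cubes `Q_j ⊆ R`. -/
structure BlockData (d : ℕ) where
  b : Euc d → ℝ
  cR : Euc d
  lR : ℝ
  lam : Fin 2 → ℝ
  a : Fin 2 → Euc d → ℝ
  cQ : Fin 2 → Euc d
  lQ : Fin 2 → ℝ

def blockNorm {d : ℕ} (B : BlockData d) : ℝ := |B.lam 0| + |B.lam 1|

/-- `B` is a `(p,γ)`-block (with dilation parameter `η`). -/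
def IsBlock {d : ℕ} (μ : Measure (Euc d)) (n η : ℝ) (p : ℝ≥0∞) (γ : ℕ)
    (B : BlockData d) : Prop :=
  0 < B.lR ∧ (∀ j, 0 < B.lQ j) ∧
  Function.support B.b ⊆ cube B.cR B.lR ∧
  (B.b =ᵐ[μ] fun x => B.lam 0 * B.a 0 x + B.lam 1 * B.a 1 x) ∧
  (∀ j, Function.support (B.a j) ⊆ cube (B.cQ j) (B.lQ j)) ∧
  (∀ j, cube (B.cQ j) (B.lQ j) ⊆ cube B.cR B.lR) ∧
  (∀ j, MemLp (B.a j) p μ) ∧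
  (∀ j, eLpNorm (B.a j) p μ ≤ ENNReal.ofReal
    ((μ (cube (B.cQ j) (η * B.lQ j))).toReal ^ (1 / p.toReal - 1) *
     (1 + tolsaDelta μ n (B.cQ j) (B.lQ j) B.cR B.lR) ^ (-(γ : ℝ))))

/-- `B` is a `(p,γ)`-atomic block: a `(p,γ)`-block with vanishing integral. -/
def IsAtomicBlock {d : ℕ} (μ : Measure (Euc d)) (n η : ℝ) (p : ℝ≥0∞) (γ : ℕ)
    (B : BlockData d) : Prop :=
  IsBlock μ n η p γ B ∧ Integrable B.b μ ∧ ∫ x, B.b x ∂μ = 0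

/-- The cube `Q` (center `c`, side `l`) is `(2,Cd)`-doubling. -/
def IsDoubling {d : ℕ} (μ : Measure (Euc d)) (Cd : ℝ) (c : Euc d) (l : ℝ) : Prop :=
  μ (cube c (2 * l)) ≤ ENNReal.ofReal Cd * μ (cube c l)

/-- The μ-mean of `g` over `s`. -/
def meanOn {d : ℕ} (μ : Measure (Euc d)) (g : Euc d → ℝ) (s : Set (Euc d)) : ℝ :=
  (μ s).toReal⁻¹ * ∫ x in s, g x ∂μ

/-- `f = ∑ᵢ (b i).b` with convergence in `L¹(μ)` and summable coefficients. -/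
def L1Decomp {d : ℕ} (μ : Measure (Euc d)) (f : Euc d → ℝ) (b : ℕ → BlockData d) : Prop :=
  Integrable f μ ∧ (∀ i, Integrable (b i).b μ) ∧
  (Summable fun i => ∫ x, |(b i).b x| ∂μ) ∧ (Summable fun i => blockNorm (b i)) ∧
  Tendsto (fun N => ∫ x, |f x - ∑ i ∈ Finset.range N, (b i).b x| ∂μ) atTop (nhds 0)

/-- A decomposition of `f` adapted to the localized space `h¹`:
the `b i` are `(p,γ)`-blocks, which are atomic blocks whenever their supporting
cube lies outside the class `D`. -/
def LocalDecomp {d : ℕ} (μ : Measure (Euc d)) (n η : ℝ) (p : ℝ≥0∞) (γ : ℕ)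
    (D : Set (Euc d × ℝ)) (f : Euc d → ℝ) (b : ℕ → BlockData d) : Prop :=
  L1Decomp μ f b ∧ ∀ i, IsBlock μ n η p γ (b i) ∧
    (((b i).cR, (b i).lR) ∉ D → ∫ x, (b i).b x ∂μ = 0)

/-!
Cauchy–Schwarz on `Q` gives `|C_R| μ(R) = |∫ a₁| ≤ ‖a₁‖₂ μ(Q)^{1/2}`. For the block take the
atoms `a₁ / λ₁` on `Q` and `C_R χ_R / λ₂` on `R`, with `λ_j = ‖f_j‖₂ μ(2Q_j)^{1/2} (1 + δ(Q_j, R))`,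
the smallest coefficients for which they satisfy the size condition. Doubling turns `μ(2Q_j)^{1/2}`
into `C_d^{1/2} μ(Q_j)^{1/2}`, `δ(R, R) = 0`, and the first bound gives
`λ₂ ≤ C_d^{1/2} |C_R| μ(R) ≤ C_d^{1/2} ‖a₁‖₂ μ(Q)^{1/2}`.
-/

section Cube

variable {d : ℕ}

lemma cube_eq_preimage_pi (c : Euc d) (l : ℝ) :
    cube c l =
      EuclideanSpace.equiv (Fin d) ℝ ⁻¹' univ.pi fun i => Icc (c i - l / 2) (c i + l / 2) := by
  ext y
  simp only [cube, mem_ofPred_eq, mem_preimage, Set.mem_pi, mem_univ, true_implies, mem_Icc,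
    abs_sub_le_iff]
  refine forall_congr' fun i => ?_
  simp only [EuclideanSpace.equiv, PiLp.coe_continuousLinearEquiv]
  constructor <;> rintro ⟨h₁, h₂⟩ <;> constructor <;> linarith

lemma isCompact_cube (c : Euc d) (l : ℝ) : IsCompact (cube c l) := by
  rw [cube_eq_preimage_pi]
  exact (EuclideanSpace.equiv (Fin d) ℝ).toHomeomorph.isCompact_preimage.2
    (isCompact_univ_pi fun _ => isCompact_Icc)

lemma measurableSet_cube (c : Euc d) (l : ℝ) : MeasurableSet (cube c l) :=
  (isCompact_cube c l).isClosed.measurableSet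

lemma cube_subset_cube (c : Euc d) {l l' : ℝ} (h : l ≤ l') : cube c l ⊆ cube c l' :=
  fun _ hy i => (hy i).trans (by linarith)

variable {μ : Measure (Euc d)} {C₀ n : ℝ}

lemma GrowthCond.measure_cube_ne_top (hμ : GrowthCond μ C₀ n) (c : Euc d) (l : ℝ) :
    μ (cube c l) ≠ ⊤ := by
  obtain ⟨r, hr, hsub⟩ := (isCompact_cube c l).isBounded.subset_ball_lt 0 c
  exact ((measure_mono hsub).trans (hμ c r hr)).trans_lt ofReal_lt_top |>.ne

lemma GrowthCond.toReal_measure_cube_two_mul_pos (hμ : GrowthCond μ C₀ n) {c : Euc d} {l : ℝ}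
    (hl : 0 < l) (h : 0 < μ (cube c l)) : 0 < (μ (cube c (2 * l))).toReal :=
  ENNReal.toReal_pos (h.trans_le (measure_mono (cube_subset_cube c (by linarith)))).ne'
    (hμ.measure_cube_ne_top c _)

end Cube

namespace MeasureTheory

variable {α : Type*} [MeasurableSpace α] {μ : Measure α} {f : α → ℝ} {s : Set α}

lemma eLpNorm_le_eLpNorm_mul_rpow_measure_of_support_subset {p q : ℝ≥0∞} (hpq : p ≤ q)
    (hf : AEStronglyMeasurable f μ) (hsupp : Function.support f ⊆ s) :
    eLpNorm f p μ ≤ eLpNorm f q μ * μ s ^ (1 / p.toReal - 1 / q.toReal) := by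
  rw [← eLpNorm_restrict_eq_of_support_subset hsupp,
    ← eLpNorm_restrict_eq_of_support_subset (p := q) hsupp, ← Measure.restrict_apply_univ]
  exact eLpNorm_le_eLpNorm_mul_rpow_measure_univ hpq hf.restrict

lemma MemLp.integrable_of_support_subset {p : ℝ≥0∞} (hf : MemLp f p μ) (hp : 1 ≤ p)
    (hsupp : Function.support f ⊆ s) (hμs : μ s ≠ ⊤) : Integrable f μ := by
  have : IsFiniteMeasure (μ.restrict s) := isFiniteMeasure_restrict.2 hμs
  exact (integrableOn_iff_integrable_of_support_subset hsupp).1 ((hf.restrict s).integrable hp)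

lemma MemLp.abs_integral_le_of_support_subset (hf : MemLp f 2 μ)
    (hsupp : Function.support f ⊆ s) (hμs : μ s ≠ ⊤) :
    |∫ x, f x ∂μ| ≤ (eLpNorm f 2 μ).toReal * (μ s).toReal ^ (1 / 2 : ℝ) := by
  have hle : eLpNorm f 1 μ ≤ eLpNorm f 2 μ * μ s ^ (1 / 2 : ℝ) := by
    convert eLpNorm_le_eLpNorm_mul_rpow_measure_of_support_subset one_le_two hf.1 hsupp using 3
    norm_num
  calc |∫ x, f x ∂μ| ≤ ∫ x, ‖f x‖ ∂μ := abs_integral_le_integral_abs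
    _ = (eLpNorm f 1 μ).toReal := by
      rw [integral_norm_eq_lintegral_enorm hf.1, eLpNorm_one_eq_lintegral_enorm]
    _ ≤ (eLpNorm f 2 μ * μ s ^ (1 / 2 : ℝ)).toReal :=
      ENNReal.toReal_mono
        (ENNReal.mul_ne_top hf.2.ne (ENNReal.rpow_ne_top_of_nonneg (by norm_num) hμs)) hle
    _ = (eLpNorm f 2 μ).toReal * (μ s).toReal ^ (1 / 2 : ℝ) := by
      rw [ENNReal.toReal_mul, ENNReal.toReal_rpow]

variable {p : ℝ≥0∞} {M : ℝ}

lemma mul_div_normalization_ae_eq (hf : MemLp f p μ) (hp : p ≠ 0) (hM : 0 < M) :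
    (fun x => (eLpNorm f p μ).toReal * M * (f x / ((eLpNorm f p μ).toReal * M))) =ᵐ[μ] f := by
  rcases eq_or_ne (eLpNorm f p μ).toReal 0 with h | h
  · have hf0 : f =ᵐ[μ] 0 := (eLpNorm_eq_zero_iff hf.1 hp).1
      ((ENNReal.toReal_eq_zero_iff _).1 h |>.resolve_right hf.2.ne)
    filter_upwards [hf0] with x hx
    simp [hx]
  · exact Eventually.of_forall fun x => mul_div_cancel₀ _ (mul_ne_zero h hM.ne')

lemma eLpNorm_div_normalization_le (hM : 0 < M) :
    eLpNorm (fun x => f x / ((eLpNorm f p μ).toReal * M)) p μ ≤ ENNReal.ofReal M⁻¹ := by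
  have hsmul : (fun x => f x / ((eLpNorm f p μ).toReal * M)) =
      ((eLpNorm f p μ).toReal * M)⁻¹ • f := funext fun x => by simp [div_eq_inv_mul]
  rw [hsmul, eLpNorm_const_smul, Real.enorm_eq_ofReal (by positivity)]
  rcases eq_or_ne (eLpNorm f p μ).toReal 0 with h | h
  · simp [h]
  rw [← ENNReal.ofReal_toReal (ENNReal.toReal_ne_zero.1 h).2, ← ENNReal.ofReal_mul (by positivity)]
  refine ENNReal.ofReal_le_ofReal (le_of_eq ?_)
  rw [ENNReal.toReal_ofReal ENNReal.toReal_nonneg]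
  field_simp

end MeasureTheory

section Block

variable {d : ℕ} (μ : Measure (Euc d)) (n η : ℝ) (p : ℝ≥0∞) (γ : ℕ)

lemma tolsaDelta_nonneg (cQ : Euc d) (lQ : ℝ) (cR : Euc d) (lR : ℝ) :
    0 ≤ tolsaDelta μ n cQ lQ cR lR :=
  le_max_of_le_left (integral_nonneg fun _ => Real.rpow_nonneg (norm_nonneg _) _)

lemma sideQR_self (c : Euc d) (l : ℝ) : sideQR c l c l = l :=
  le_antisymm (csInf_le ⟨l, fun _ ht => ht.1⟩ ⟨le_rfl, subset_rfl⟩)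
    (le_csInf ⟨l, le_rfl, subset_rfl⟩ fun _ ht => ht.1)

lemma tolsaDelta_self (c : Euc d) (l : ℝ) : tolsaDelta μ n c l c l = 0 := by
  simp [tolsaDelta, sideQR_self]

/-- A function on `Q` divided by its `Lᵖ` norm times this factor has exactly the size allowed
for an atom of a block in `R`. -/
def blockWeight (c : Euc d) (l : ℝ) (cR : Euc d) (lR : ℝ) : ℝ :=
  (μ (cube c (η * l))).toReal ^ (1 - 1 / p.toReal) * (1 + tolsaDelta μ n c l cR lR) ^ γ

variable {μ n η p γ}

lemma blockWeight_nonneg (c : Euc d) (l : ℝ) (cR : Euc d) (lR : ℝ) :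
    0 ≤ blockWeight μ n η p γ c l cR lR := by
  have := tolsaDelta_nonneg μ n c l cR lR
  unfold blockWeight
  positivity

lemma blockWeight_pos {c : Euc d} {l : ℝ} (cR : Euc d) (lR : ℝ)
    (h : 0 < (μ (cube c (η * l))).toReal) : 0 < blockWeight μ n η p γ c l cR lR := by
  have := tolsaDelta_nonneg μ n c l cR lR
  unfold blockWeight
  positivity

lemma inv_blockWeight (c : Euc d) (l : ℝ) (cR : Euc d) (lR : ℝ) :
    (blockWeight μ n η p γ c l cR lR)⁻¹ = (μ (cube c (η * l))).toReal ^ (1 / p.toReal - 1) *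
      (1 + tolsaDelta μ n c l cR lR) ^ (-(γ : ℝ)) := by
  have := tolsaDelta_nonneg μ n c l cR lR
  rw [blockWeight, mul_inv, ← Real.rpow_neg ENNReal.toReal_nonneg, neg_sub,
    Real.rpow_neg (by linarith), Real.rpow_natCast]

variable (μ n η p γ)

def normalizedBlock (f : Fin 2 → Euc d → ℝ) (cQ : Fin 2 → Euc d) (lQ : Fin 2 → ℝ)
    (cR : Euc d) (lR : ℝ) : BlockData d where
  b x := f 0 x + f 1 x
  cR := cR
  lR := lR
  lam j := (eLpNorm (f j) p μ).toReal * blockWeight μ n η p γ (cQ j) (lQ j) cR lR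
  a j x := f j x / ((eLpNorm (f j) p μ).toReal * blockWeight μ n η p γ (cQ j) (lQ j) cR lR)
  cQ := cQ
  lQ := lQ

variable {μ n η p γ}

lemma isBlock_normalizedBlock {f : Fin 2 → Euc d → ℝ} {cQ : Fin 2 → Euc d} {lQ : Fin 2 → ℝ}
    {cR : Euc d} {lR : ℝ} (hp : p ≠ 0) (hlR : 0 < lR) (hlQ : ∀ j, 0 < lQ j)
    (hf : ∀ j, MemLp (f j) p μ) (hsupp : ∀ j, Function.support (f j) ⊆ cube (cQ j) (lQ j))
    (hQR : ∀ j, cube (cQ j) (lQ j) ⊆ cube cR lR)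
    (hμ : ∀ j, 0 < (μ (cube (cQ j) (η * lQ j))).toReal) :
    IsBlock μ n η p γ (normalizedBlock μ n η p γ f cQ lQ cR lR) := by
  have hw j := blockWeight_pos (n := n) (p := p) (γ := γ) cR lR (hμ j)
  refine ⟨hlR, hlQ, ?_, ?_, fun j x hx => hsupp j ?_, hQR, fun j => ?_, fun j => ?_⟩
  · exact (Function.support_add _ _).trans
      (union_subset ((hsupp 0).trans (hQR 0)) ((hsupp 1).trans (hQR 1)))
  · filter_upwards [mul_div_normalization_ae_eq (hf 0) hp (hw 0),
      mul_div_normalization_ae_eq (hf 1) hp (hw 1)] with x h₀ h₁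
    simp only [normalizedBlock, h₀, h₁]
  · exact fun h0 => hx (by simp [normalizedBlock, h0])
  · simpa only [normalizedBlock, div_eq_mul_inv] using (hf j).mul_const _
  · rw [← inv_blockWeight]
    exact eLpNorm_div_normalization_le (hw j)

lemma blockNorm_normalizedBlock (f : Fin 2 → Euc d → ℝ) (cQ : Fin 2 → Euc d)
    (lQ : Fin 2 → ℝ) (cR : Euc d) (lR : ℝ) :
    blockNorm (normalizedBlock μ n η p γ f cQ lQ cR lR) =
      (eLpNorm (f 0) p μ).toReal * blockWeight μ n η p γ (cQ 0) (lQ 0) cR lR +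
      (eLpNorm (f 1) p μ).toReal * blockWeight μ n η p γ (cQ 1) (lQ 1) cR lR := by
  simp only [blockNorm, normalizedBlock,
    abs_of_nonneg (mul_nonneg ENNReal.toReal_nonneg (blockWeight_nonneg _ _ _ _))]

lemma isAtomicBlock_normalizedBlock {f : Fin 2 → Euc d → ℝ} {cQ : Fin 2 → Euc d}
    {lQ : Fin 2 → ℝ} {cR : Euc d} {lR : ℝ} (hp : p ≠ 0) (hlR : 0 < lR) (hlQ : ∀ j, 0 < lQ j)
    (hf : ∀ j, MemLp (f j) p μ) (hsupp : ∀ j, Function.support (f j) ⊆ cube (cQ j) (lQ j))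
    (hQR : ∀ j, cube (cQ j) (lQ j) ⊆ cube cR lR)
    (hμ : ∀ j, 0 < (μ (cube (cQ j) (η * lQ j))).toReal) (hint : ∀ j, Integrable (f j) μ)
    (hmean : ∫ x, f 0 x ∂μ + ∫ x, f 1 x ∂μ = 0) :
    IsAtomicBlock μ n η p γ (normalizedBlock μ n η p γ f cQ lQ cR lR) :=
  ⟨isBlock_normalizedBlock hp hlR hlQ hf hsupp hQR hμ, (hint 0).add (hint 1),
    (integral_add (hint 0) (hint 1)).trans hmean⟩

end Block

section Doubling

variable {d : ℕ} {μ : Measure (Euc d)} {Cd : ℝ} {c : Euc d} {l : ℝ}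

lemma IsDoubling.toReal_measure_le (h : IsDoubling μ Cd c l) (hCd : 0 ≤ Cd)
    (hfin : μ (cube c l) ≠ ⊤) :
    (μ (cube c (2 * l))).toReal ≤ Cd * (μ (cube c l)).toReal := by
  rw [← ENNReal.toReal_ofReal hCd, ← ENNReal.toReal_mul]
  exact ENNReal.toReal_mono (ENNReal.mul_ne_top ENNReal.ofReal_ne_top hfin) h

lemma IsDoubling.blockWeight_le (h : IsDoubling μ Cd c l) (hCd : 0 ≤ Cd)
    (hfin : μ (cube c l) ≠ ⊤) (n : ℝ) (cR : Euc d) (lR : ℝ) :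
    blockWeight μ n 2 2 1 c l cR lR ≤
      Cd ^ (1 / 2 : ℝ) * (μ (cube c l)).toReal ^ (1 / 2 : ℝ) * (1 + tolsaDelta μ n c l cR lR) := by
  have := tolsaDelta_nonneg μ n c l cR lR
  have hexp : 1 - 1 / (2 : ℝ≥0∞).toReal = 1 / 2 := by norm_num
  rw [blockWeight, hexp, pow_one, ← Real.mul_rpow hCd ENNReal.toReal_nonneg]
  gcongr
  exact h.toReal_measure_le hCd hfin

end Doubling

section IndicatorBlock

variable {d : ℕ} {μ : Measure (Euc d)} {n : ℝ} {f : Euc d → ℝ} {cQ cR : Euc d} {lQ lR CR : ℝ}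

lemma isAtomicBlock_normalizedBlock_indicator {C₀ m : ℝ} (hμ : GrowthCond μ C₀ m)
    (hlQ : 0 < lQ) (hlR : 0 < lR) (hμQ : 0 < μ (cube cQ lQ)) (hμR : 0 < μ (cube cR lR))
    (hQR : cube cQ lQ ⊆ cube cR lR) (hf : MemLp f 2 μ)
    (hsupp : Function.support f ⊆ cube cQ lQ)
    (hCR : CR = -((μ (cube cR lR)).toReal⁻¹ * ∫ x, f x ∂μ)) :
    IsAtomicBlock μ n 2 2 1 (normalizedBlock μ n 2 2 1
      ![f, (cube cR lR).indicator fun _ => CR] ![cQ, cR] ![lQ, lR] cR lR) := by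
  have hR := hμ.measure_cube_ne_top cR lR
  have hind := memLp_indicator_const 2 (measurableSet_cube cR lR) CR (Or.inr hR)
  refine isAtomicBlock_normalizedBlock two_ne_zero hlR
    (Fin.forall_fin_two.2 ⟨hlQ, hlR⟩) (Fin.forall_fin_two.2 ⟨hf, hind⟩)
    (Fin.forall_fin_two.2 ⟨hsupp, Set.support_indicator_subset⟩)
    (Fin.forall_fin_two.2 ⟨hQR, subset_rfl⟩)
    (Fin.forall_fin_two.2 ⟨hμ.toReal_measure_cube_two_mul_pos hlQ hμQ,
      hμ.toReal_measure_cube_two_mul_pos hlR hμR⟩)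
    (Fin.forall_fin_two.2 ⟨hf.integrable_of_support_subset one_le_two hsupp
      (hμ.measure_cube_ne_top cQ lQ),
      hind.integrable_of_support_subset one_le_two Set.support_indicator_subset hR⟩) ?_
  have hRpos : 0 < (μ (cube cR lR)).toReal := ENNReal.toReal_pos hμR.ne' hR
  simp only [Matrix.cons_val_zero, Matrix.cons_val_one]
  rw [integral_indicator_const CR (measurableSet_cube cR lR), smul_eq_mul, measureReal_def, hCR,
    mul_neg, mul_inv_cancel_left₀ hRpos.ne', add_neg_cancel]

lemma blockNorm_normalizedBlock_indicator_le {Cd : ℝ} (hdQ : IsDoubling μ Cd cQ lQ)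
    (hdR : IsDoubling μ Cd cR lR) (hCd : 0 ≤ Cd)
    (hQ : μ (cube cQ lQ) ≠ ⊤) (hR : μ (cube cR lR) ≠ ⊤)
    (hCR : |CR| * (μ (cube cR lR)).toReal ≤
      (eLpNorm f 2 μ).toReal * (μ (cube cQ lQ)).toReal ^ (1 / 2 : ℝ)) :
    blockNorm (normalizedBlock μ n 2 2 1 ![f, (cube cR lR).indicator fun _ => CR] ![cQ, cR]
        ![lQ, lR] cR lR) ≤
      2 * Cd ^ (1 / 2 : ℝ) * (eLpNorm f 2 μ).toReal * (μ (cube cQ lQ)).toReal ^ (1 / 2 : ℝ) *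
        (1 + tolsaDelta μ n cQ lQ cR lR) := by
  set N := (eLpNorm f 2 μ).toReal
  set mQ := (μ (cube cQ lQ)).toReal ^ (1 / 2 : ℝ)
  set mR := (μ (cube cR lR)).toReal ^ (1 / 2 : ℝ)
  set δ := tolsaDelta μ n cQ lQ cR lR
  have hδ : 0 ≤ δ := tolsaDelta_nonneg μ n cQ lQ cR lR
  have hwQ := hdQ.blockWeight_le hCd hQ n cR lR
  have hwR := hdR.blockWeight_le hCd hR n cR lR
  rw [tolsaDelta_self, add_zero, mul_one] at hwR
  have hind : (eLpNorm ((cube cR lR).indicator fun _ => CR) 2 μ).toReal = |CR| * mR := by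
    rw [eLpNorm_indicator_const (measurableSet_cube cR lR) two_ne_zero ofNat_ne_top,
      ENNReal.toReal_mul, ← ENNReal.toReal_rpow, toReal_enorm, Real.norm_eq_abs]
    norm_num [mR]
  have hmR : mR * mR = (μ (cube cR lR)).toReal := by
    rw [← Real.rpow_add' ENNReal.toReal_nonneg (by norm_num)]
    norm_num [mR]
  rw [blockNorm_normalizedBlock]
  simp only [Matrix.cons_val_zero, Matrix.cons_val_one, hind]
  calc N * blockWeight μ n 2 2 1 cQ lQ cR lR + |CR| * mR * blockWeight μ n 2 2 1 cR lR cR lR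
      ≤ N * (Cd ^ (1 / 2 : ℝ) * mQ * (1 + δ)) + |CR| * mR * (Cd ^ (1 / 2 : ℝ) * mR) := by
        gcongr
    _ = Cd ^ (1 / 2 : ℝ) * (N * mQ * (1 + δ) + |CR| * (μ (cube cR lR)).toReal) := by
        rw [← hmR]; ring
    _ ≤ Cd ^ (1 / 2 : ℝ) * (N * mQ * (1 + δ) + N * mQ * (1 + δ)) := by
        gcongr Cd ^ _ * (_ + ?_)
        exact hCR.trans (le_mul_of_one_le_right (by positivity) (by linarith : 1 ≤ 1 + δ))
    _ = 2 * Cd ^ (1 / 2 : ℝ) * N * mQ * (1 + δ) := by ring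

end IndicatorBlock

theorem stmt8_general (d : ℕ) (n C₀ Cd : ℝ) (hCd : 1 ≤ Cd) :
    ∃ C : ℝ, 0 < C ∧
      ∀ (μ : Measure (Euc d)), GrowthCond μ C₀ n →
        ∀ (g : Euc d → ℝ) (cQ cR : Euc d) (lQ lR : ℝ), 0 < lQ → 0 < lR →
          IsDoubling μ Cd cQ lQ → IsDoubling μ Cd cR lR →
          0 < μ (cube cQ lQ) → 0 < μ (cube cR lR) → cube cQ lQ ⊆ cube cR lR →
          IntegrableOn g (cube cR lR) μ →
          ∀ (a₁ : Euc d → ℝ) (CR : ℝ),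
            a₁ = (cube cQ lQ ∩ {x | g x ≠ meanOn μ g (cube cR lR)}).indicator
              (fun x => |g x - meanOn μ g (cube cR lR)| ^ 2 /
                (g x - meanOn μ g (cube cR lR))) →
            MemLp a₁ 2 μ →
            CR = -((μ (cube cR lR)).toReal⁻¹ * ∫ x, a₁ x ∂μ) →
            |CR| * (μ (cube cR lR)).toReal ≤
              (∫ x, |a₁ x| ^ (2 : ℝ) ∂μ) ^ (1/2 : ℝ) *
                (μ (cube cQ lQ)).toReal ^ (1/2 : ℝ) ∧
            ∃ B : BlockData d, IsAtomicBlock μ n 2 2 1 B ∧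
              (B.b = fun x => a₁ x + (cube cR lR).indicator (fun _ => CR) x) ∧
              blockNorm B ≤ C * (∫ x, |a₁ x| ^ (2 : ℝ) ∂μ) ^ (1/2 : ℝ) *
                (μ (cube cQ lQ)).toReal ^ (1/2 : ℝ) *
                (1 + tolsaDelta μ n cQ lQ cR lR) := by
  refine ⟨2 * Cd ^ (1 / 2 : ℝ), by positivity, ?_⟩
  intro μ hμ g cQ cR lQ lR hlQ hlR hdQ hdR hμQ hμR hQR _ a₁ CR ha₁ ha₁2 hCR
  have hQ := hμ.measure_cube_ne_top cQ lQ
  have hR := hμ.measure_cube_ne_top cR lR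
  have hnorm : (eLpNorm a₁ 2 μ).toReal = (∫ x, |a₁ x| ^ (2 : ℝ) ∂μ) ^ (1 / 2 : ℝ) := by
    rw [ha₁2.eLpNorm_eq_integral_rpow_norm two_ne_zero ofNat_ne_top,
      ENNReal.toReal_ofReal (by positivity)]
    norm_num
  rw [← hnorm]
  have hsupp : Function.support a₁ ⊆ cube cQ lQ :=
    ha₁ ▸ Set.support_indicator_subset.trans inter_subset_left
  have hCR_le : |CR| * (μ (cube cR lR)).toReal ≤
      (eLpNorm a₁ 2 μ).toReal * (μ (cube cQ lQ)).toReal ^ (1 / 2 : ℝ) := by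
    have hRpos : 0 < (μ (cube cR lR)).toReal := ENNReal.toReal_pos hμR.ne' hR
    rw [hCR, abs_neg, abs_mul, abs_inv, abs_of_pos hRpos, mul_right_comm,
      inv_mul_cancel₀ hRpos.ne', one_mul]
    exact ha₁2.abs_integral_le_of_support_subset hsupp hQ
  exact ⟨hCR_le, _,
    isAtomicBlock_normalizedBlock_indicator hμ hlQ hlR hμQ hμR hQR ha₁2 hsupp hCR, rfl,
    blockNorm_normalizedBlock_indicator_le hdQ hdR (by linarith) hQ hR hCR_le⟩

/-- the auxiliary construction in the proof of (2.6): with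
`a₁ = |g - m_R g|²/(g - m_R g) · χ_{Q ∩ {g ≠ m_R g}}` and `C_R` chosen so that
`b = a₁ + C_R χ_R` has integral zero, one has `|C_R| μ(R) ≤ ‖a₁‖_{L²} μ(Q)^{1/2}` and `b`
is a `(2,1)`-atomic block with `|b|_{H^{1,2}_{atb}} ≤ C ‖a₁‖_{L²} μ(Q)^{1/2} (1+δ(Q,R))`. -/
theorem stmt8 (d : ℕ) (n C₀ Cd : ℝ) (hn : 0 < n) (hnd : n ≤ (d : ℝ))
    (hC₀ : 0 < C₀) (hCd : 1 ≤ Cd) :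
    ∃ C : ℝ, 0 < C ∧
      ∀ (μ : Measure (Euc d)), GrowthCond μ C₀ n →
        ∀ (g : Euc d → ℝ) (cQ cR : Euc d) (lQ lR : ℝ), 0 < lQ → 0 < lR →
          IsDoubling μ Cd cQ lQ → IsDoubling μ Cd cR lR →
          0 < μ (cube cQ lQ) → 0 < μ (cube cR lR) → cube cQ lQ ⊆ cube cR lR →
          IntegrableOn g (cube cR lR) μ →
          ∀ (a₁ : Euc d → ℝ) (CR : ℝ),
            a₁ = (cube cQ lQ ∩ {x | g x ≠ meanOn μ g (cube cR lR)}).indicator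
              (fun x => |g x - meanOn μ g (cube cR lR)| ^ 2 /
                (g x - meanOn μ g (cube cR lR))) →
            MemLp a₁ 2 μ →
            CR = -((μ (cube cR lR)).toReal⁻¹ * ∫ x, a₁ x ∂μ) →
            |CR| * (μ (cube cR lR)).toReal ≤
              (∫ x, |a₁ x| ^ (2 : ℝ) ∂μ) ^ (1/2 : ℝ) *
                (μ (cube cQ lQ)).toReal ^ (1/2 : ℝ) ∧
            ∃ B : BlockData d, IsAtomicBlock μ n 2 2 1 B ∧
              (B.b = fun x => a₁ x + (cube cR lR).indicator (fun _ => CR) x) ∧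
              blockNorm B ≤ C * (∫ x, |a₁ x| ^ (2 : ℝ) ∂μ) ^ (1/2 : ℝ) *
                (μ (cube cQ lQ)).toReal ^ (1/2 : ℝ) *
                (1 + tolsaDelta μ n cQ lQ cR lR) :=
  stmt8_general d n C₀ Cd hCd

end
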